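/- Let X, Y be Banach spaces, 1 ≤ p < ∞, and u : X → Y a continuous linear operator. Then u is absolutely p-summing if and only if there exist a constant C ≥ 0 and a regular Borel probability measure μ on the closed unit ball B_{X*} of the dual of X, equipped with the weak-star topology, such that ‖u(x)‖ ≤ C · (∫_{B_{X*}} |φ(x)|^p dμ(φ))^{1/p} for all x ∈ X. -/

import Mathlib

open scoped BigOperators ENNReal
open Finset

noncomputable section

/-- `u` is absolutely `t`-summing with constant `C`:
`(∑ⱼ ‖u xⱼ‖^t)^(1/t) ≤ C · sup_{φ ∈ B_{X*}} (∑ⱼ |φ xⱼ|^t)^(1/t)`. -/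
def PSummingWith (𝕜 : Type*) [RCLike 𝕜] {X Y : Type*} [NormedAddCommGroup X] [NormedSpace 𝕜 X]
    [NormedAddCommGroup Y] [NormedSpace 𝕜 Y] (t : ℝ) (u : X →L[𝕜] Y) (C : ℝ) : Prop :=
  ∀ (m : ℕ) (x : Fin m → X),
    (∑ j, ‖u (x j)‖ ^ t) ^ (1 / t) ≤
      C * ⨆ φ : {φ : StrongDual 𝕜 X // ‖φ‖ ≤ 1},
            (∑ j, ‖(φ : StrongDual 𝕜 X) (x j)‖ ^ t) ^ (1 / t)

/-- `u` is absolutely `t`-summing. -/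
def PSumming (𝕜 : Type*) [RCLike 𝕜] {X Y : Type*} [NormedAddCommGroup X] [NormedSpace 𝕜 X]
    [NormedAddCommGroup Y] [NormedSpace 𝕜 Y] (t : ℝ) (u : X →L[𝕜] Y) : Prop :=
  ∃ C : ℝ, 0 ≤ C ∧ PSummingWith 𝕜 t u C

/-- The `t`-summing norm `π_t(u)`: the infimum of the admissible constants. -/
def piNorm (𝕜 : Type*) [RCLike 𝕜] {X Y : Type*} [NormedAddCommGroup X] [NormedSpace 𝕜 X]
    [NormedAddCommGroup Y] [NormedSpace 𝕜 Y] (t : ℝ) (u : X →L[𝕜] Y) : ℝ :=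
  sInf {C : ℝ | 0 ≤ C ∧ PSummingWith 𝕜 t u C}

open MeasureTheory

/-- The closed unit ball of the dual of `X`, with the weak-star topology. -/
def dualBall (𝕜 X : Type*) [RCLike 𝕜] [NormedAddCommGroup X] [NormedSpace 𝕜 X] :
    Set (WeakDual 𝕜 X) :=
  ⇑WeakDual.toStrongDual ⁻¹' Metric.closedBall 0 1

instance (𝕜 X : Type*) [RCLike 𝕜] [NormedAddCommGroup X] [NormedSpace 𝕜 X] :
    CompactSpace (dualBall 𝕜 X) :=
  isCompact_iff_compactSpace.mp (WeakDual.isCompact_closedBall (0 : StrongDual 𝕜 X) 1)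

instance (𝕜 X : Type*) [RCLike 𝕜] [NormedAddCommGroup X] [NormedSpace 𝕜 X] :
    MeasurableSpace (dualBall 𝕜 X) := borel _

instance (𝕜 X : Type*) [RCLike 𝕜] [NormedAddCommGroup X] [NormedSpace 𝕜 X] :
    BorelSpace (dualBall 𝕜 X) := ⟨rfl⟩

set_option linter.unusedSectionVars false

open scoped NNReal
open MeasureTheory Set BoundedContinuousFunction

namespace PietschAux

variable {V : Type*} [TopologicalSpace V] [CompactSpace V] [T2Space V]

/-- Coerce a bounded continuous `ℝ≥0`-valued map to a real continuous map. -/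
def nnToCont (f : CompactlySupportedContinuousMap V ℝ≥0) : C(V, ℝ) :=
  ⟨fun x => ((f x : ℝ≥0) : ℝ), NNReal.continuous_coe.comp f.continuous⟩

@[simp] lemma nnToCont_apply (f : CompactlySupportedContinuousMap V ℝ≥0) (x : V) : nnToCont f x = (f x : ℝ) := rfl

@[simp] lemma cme_apply (f : C(V, ℝ≥0)) (x : V) :
    CompactlySupportedContinuousMap.continuousMapEquiv f x = f x := rfl

variable (Λ : C(V, ℝ) →ₗ[ℝ] ℝ)

lemma lam_mono (hΛ : ∀ f : C(V, ℝ), (∀ x, 0 ≤ f x) → 0 ≤ Λ f)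
    {f g : C(V, ℝ)} (h : ∀ x, f x ≤ g x) : Λ f ≤ Λ g := by
  have h1 := hΛ (g - f) (fun x => by simpa using sub_nonneg.2 (h x))
  have h2 : 0 ≤ Λ g - Λ f := by simpa [map_sub] using h1
  linarith

/-- The `ℝ≥0`-linear functional on bounded continuous nonnegative functions induced by `Λ`. -/
def lamNN (hΛ : ∀ f : C(V, ℝ), (∀ x, 0 ≤ f x) → 0 ≤ Λ f) : (CompactlySupportedContinuousMap V ℝ≥0) →ₗ[ℝ≥0] ℝ≥0 where
  toFun f := Real.toNNReal (Λ (nnToCont f))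
  map_add' f g := by
    show (Λ (nnToCont (f + g))).toNNReal
        = (Λ (nnToCont f)).toNNReal + (Λ (nnToCont g)).toNNReal
    have h1 : nnToCont (f + g) = nnToCont f + nnToCont g := by
      ext x; simp [nnToCont]
    rw [h1, map_add, Real.toNNReal_add (hΛ _ (fun x => (f x).coe_nonneg))
      (hΛ _ (fun x => (g x).coe_nonneg))]
  map_smul' c f := by
    show (Λ (nnToCont (c • f))).toNNReal = c * (Λ (nnToCont f)).toNNReal
    have h1 : nnToCont (c • f) = (c : ℝ) • nnToCont f := by
      ext x; simp [nnToCont, NNReal.smul_def]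
    rw [h1, _root_.map_smul]
    simp only [smul_eq_mul]
    rw [Real.toNNReal_mul (by positivity), Real.toNNReal_coe]

variable (hΛ : ∀ f : C(V, ℝ), (∀ x, 0 ≤ f x) → 0 ≤ Λ f)

lemma lamNN_coe (f : CompactlySupportedContinuousMap V ℝ≥0) : ((lamNN Λ hΛ f : ℝ≥0) : ℝ) = Λ (nnToCont f) :=
  Real.coe_toNNReal _ (hΛ _ (fun x => (f x).coe_nonneg))

lemma lamNN_one : lamNN Λ hΛ (CompactlySupportedContinuousMap.continuousMapEquiv (1 : C(V, ℝ≥0))) = Real.toNNReal (Λ 1) := by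
  have h1 : nnToCont (CompactlySupportedContinuousMap.continuousMapEquiv (1 : C(V, ℝ≥0))) = 1 := by ext x; simp [nnToCont]
  show (Λ (nnToCont (CompactlySupportedContinuousMap.continuousMapEquiv (1 : C(V, ℝ≥0))))).toNNReal = _
  rw [h1]

/-- The Riesz content coming from `Λ`. -/
def rContent : Content V where
  toFun K := rieszContentAux (lamNN Λ hΛ) K
  mono' K₁ K₂ h := rieszContentAux_mono _ h
  sup_le' K₁ K₂ := rieszContentAux_sup_le _ K₁ K₂
  sup_disjoint' K₁ K₂ hd h₁ h₂ := by
    refine le_antisymm (rieszContentAux_sup_le _ K₁ K₂) ?_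
    refine le_csInf (rieszContentAux_image_nonempty _ _) ?_
    rintro a ⟨f, hf, rfl⟩
    obtain ⟨g, hg0, hg1, hg01⟩ := exists_continuous_zero_one_of_isClosed h₁ h₂ hd
    set g₁ : CompactlySupportedContinuousMap V ℝ≥0 := CompactlySupportedContinuousMap.continuousMapEquiv ⟨fun x => f x * Real.toNNReal (1 - g x),
      (f.continuous.mul (continuous_real_toNNReal.comp
        (continuous_const.sub g.continuous)))⟩ with hg₁def
    set g₂ : CompactlySupportedContinuousMap V ℝ≥0 := CompactlySupportedContinuousMap.continuousMapEquiv ⟨fun x => f x * Real.toNNReal (g x),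
      (f.continuous.mul (continuous_real_toNNReal.comp g.continuous))⟩ with hg₂def
    have hsum : g₁ + g₂ = f := by
      ext x
      have h01 := hg01 x
      have h2 : Real.toNNReal (1 - g x) + Real.toNNReal (g x) = 1 := by
        rw [← Real.toNNReal_add (by linarith [h01.2]) h01.1]
        norm_num
      simp only [CompactlySupportedContinuousMap.coe_add, Pi.add_apply, hg₁def, hg₂def,
        cme_apply, ContinuousMap.coe_mk]
      rw [← mul_add, h2, mul_one]
    have hK₁ : ∀ x ∈ K₁, (1 : ℝ≥0) ≤ g₁ x := by
      intro x hx
      have hgx : g x = 0 := hg0 hx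
      simp only [hg₁def, cme_apply, ContinuousMap.coe_mk, hgx]
      norm_num
      exact hf x (Or.inl hx)
    have hK₂ : ∀ x ∈ K₂, (1 : ℝ≥0) ≤ g₂ x := by
      intro x hx
      have hgx : g x = 1 := hg1 hx
      simp only [hg₂def, cme_apply, ContinuousMap.coe_mk, hgx]
      norm_num
      exact hf x (Or.inr hx)
    calc rieszContentAux (lamNN Λ hΛ) K₁ + rieszContentAux (lamNN Λ hΛ) K₂
        ≤ lamNN Λ hΛ g₁ + lamNN Λ hΛ g₂ :=
          add_le_add (rieszContentAux_le _ hK₁) (rieszContentAux_le _ hK₂)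
      _ = lamNN Λ hΛ f := by rw [← map_add, hsum]

/-- The measure associated with `Λ`. -/
def rMeasure [MeasurableSpace V] [BorelSpace V] : Measure V := (rContent Λ hΛ).measure


lemma min_sub_min_nonneg {t a b : ℝ} (hab : a ≤ b) : 0 ≤ min t b - min t a :=
  sub_nonneg.2 (min_le_min le_rfl hab)

lemma min_sub_min_le {t a b : ℝ} (hab : a ≤ b) : min t b - min t a ≤ b - a := by
  rcases le_total t a with h | h <;> rcases le_total t b with h' | h' <;>
    simp [min_eq_left, min_eq_right, *] <;> linarith

variable [MeasurableSpace V] [BorelSpace V]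

lemma rMeasure_univ : rMeasure Λ hΛ Set.univ = ((lamNN Λ hΛ (CompactlySupportedContinuousMap.continuousMapEquiv (1 : C(V, ℝ≥0))) : ℝ≥0) : ℝ≥0∞) := by
  have h1 : rMeasure Λ hΛ Set.univ
      = (rContent Λ hΛ).innerContent ⟨Set.univ, isOpen_univ⟩ := by
    rw [rMeasure, Content.measure_apply _ MeasurableSet.univ,
      Content.outerMeasure_of_isOpen _ _ isOpen_univ]
  rw [h1, Content.innerContent_of_isCompact _ isCompact_univ isOpen_univ]
  have h2 : (rContent Λ hΛ) ⟨Set.univ, isCompact_univ⟩ = ((lamNN Λ hΛ (CompactlySupportedContinuousMap.continuousMapEquiv (1 : C(V, ℝ≥0))) : ℝ≥0) : ℝ≥0∞) := by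
    rw [show (rContent Λ hΛ) ⟨Set.univ, isCompact_univ⟩
        = ((rContent Λ hΛ).toFun ⟨Set.univ, isCompact_univ⟩ : ℝ≥0∞) from rfl]
    norm_cast
    refine le_antisymm (rieszContentAux_le _ (fun x _ => by simp)) ?_
    refine le_csInf (rieszContentAux_image_nonempty _ _) ?_
    rintro a ⟨g, hg, rfl⟩
    rw [← NNReal.coe_le_coe, lamNN_coe, lamNN_coe]
    refine lam_mono Λ hΛ (fun x => ?_)
    have := hg x (Set.mem_univ x)
    simpa [nnToCont] using this
  rw [h2]

lemma rMeasure_isFiniteMeasure : IsFiniteMeasure (rMeasure Λ hΛ) := by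
  constructor
  rw [rMeasure_univ]
  exact ENNReal.coe_lt_top

lemma rMeasure_regular : (rMeasure Λ hΛ).Regular := by
  unfold rMeasure
  infer_instance

lemma lam_piece_le (K : TopologicalSpace.Compacts V) {δ : ℝ} (hδ : 0 < δ) (q : C(V, ℝ))
    (hq1 : ∀ x, 0 ≤ q x) (hq2 : ∀ x, q x ≤ δ) (hq3 : ∀ x, x ∉ (K : Set V) → q x = 0) :
    Λ q ≤ δ * ((rieszContentAux (lamNN Λ hΛ) K : ℝ≥0) : ℝ) := by
  have main : ∀ g : CompactlySupportedContinuousMap V ℝ≥0, (∀ x ∈ K, (1:ℝ≥0) ≤ g x) → Λ q ≤ δ * Λ (nnToCont g) := by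
    intro g hg
    have hle : ∀ x, q x ≤ (δ • nnToCont g) x := by
      intro x
      by_cases hx : x ∈ (K : Set V)
      · have h1 : (1:ℝ) ≤ (g x : ℝ) := by exact_mod_cast hg x hx
        have := hq2 x
        simp only [ContinuousMap.smul_apply, nnToCont_apply, smul_eq_mul]
        nlinarith
      · rw [hq3 x hx]
        simp only [ContinuousMap.smul_apply, nnToCont_apply, smul_eq_mul]
        positivity
    have := lam_mono Λ hΛ hle
    rwa [_root_.map_smul, smul_eq_mul] at this
  refine le_of_forall_pos_le_add ?_
  intro ε hε
  have hεδ : (0:ℝ≥0) < (ε / δ).toNNReal := Real.toNNReal_pos.2 (by positivity)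
  obtain ⟨g, hg, hlt⟩ := exists_lt_rieszContentAux_add_pos (lamNN Λ hΛ) K hεδ
  have hlt' : Λ (nnToCont g) ≤ ((rieszContentAux (lamNN Λ hΛ) K : ℝ≥0) : ℝ) + ε / δ := by
    have := hlt.le
    rw [← NNReal.coe_le_coe] at this
    rw [← lamNN_coe Λ hΛ]
    refine this.trans (le_of_eq ?_)
    push_cast
    rw [Real.coe_toNNReal _ (by positivity)]
  calc Λ q ≤ δ * Λ (nnToCont g) := main g hg
    _ ≤ δ * (((rieszContentAux (lamNN Λ hΛ) K : ℝ≥0) : ℝ) + ε / δ) := by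
        exact mul_le_mul_of_nonneg_left hlt' hδ.le
    _ = δ * ((rieszContentAux (lamNN Λ hΛ) K : ℝ≥0) : ℝ) + ε := by
        field_simp

lemma content_le_measure (K : TopologicalSpace.Compacts V) {U : Set V} (hU : IsOpen U)
    (hKU : (K : Set V) ⊆ U) :
    ((rieszContentAux (lamNN Λ hΛ) K : ℝ≥0) : ℝ) ≤ (rMeasure Λ hΛ U).toReal := by
  have h1 : ((rContent Λ hΛ) K : ℝ≥0∞) ≤ rMeasure Λ hΛ U := by
    rw [rMeasure, Content.measure_apply _ hU.measurableSet,
      Content.outerMeasure_of_isOpen _ _ hU]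
    exact Content.le_innerContent _ _ ⟨U, hU⟩ hKU
  have hfin : rMeasure Λ hΛ U ≠ ⊤ := by
    haveI := rMeasure_isFiniteMeasure Λ hΛ
    exact measure_ne_top _ _
  have := ENNReal.toReal_mono hfin h1
  rw [show (rContent Λ hΛ) K = ((rieszContentAux (lamNN Λ hΛ) K : ℝ≥0) : ℝ≥0∞) from rfl,
    ENNReal.coe_toReal] at this
  exact this

lemma lam_le_integral (f : C(V, ℝ)) (hf : ∀ x, 0 ≤ f x) :
    Λ f ≤ ∫ x, f x ∂(rMeasure Λ hΛ) := by
  set μ := rMeasure Λ hΛ with hμdef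
  haveI : IsFiniteMeasure μ := rMeasure_isFiniteMeasure Λ hΛ
  refine le_of_forall_pos_le_add ?_
  intro ε hε
  obtain ⟨n, hn⟩ := exists_nat_gt (max 1 ((2 * (‖f‖ + 1) * (μ Set.univ).toReal) / ε))
  have hn1 : (1:ℝ) ≤ n := le_of_lt (lt_of_le_of_lt (le_max_left _ _) hn)
  have hn0 : (0:ℝ) < n := by linarith
  set δ : ℝ := (‖f‖ + 1) / n with hδdef
  have hδ : 0 < δ := by positivity
  have hnδ : (n:ℝ) * δ = ‖f‖ + 1 := by rw [hδdef]; field_simp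
  -- the truncation functions
  set G : ℕ → C(V, ℝ) := fun i => ContinuousMap.mk (fun x => min (f x) ((i:ℝ) * δ))
    (f.continuous.min continuous_const) with hGdef
  set F : ℕ → C(V, ℝ) := fun i => G (i+1) - G i with hFdef
  have hGx : ∀ i x, G i x = min (f x) ((i:ℝ) * δ) := fun i x => rfl
  have hFx : ∀ i x, F i x = min (f x) (((i:ℝ)+1) * δ) - min (f x) ((i:ℝ) * δ) := by
    intro i x
    simp only [hFdef, ContinuousMap.sub_apply, hGx]
    push_cast
    ring_nf
  have hfx_le : ∀ x, f x ≤ ‖f‖ := fun x =>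
    (le_abs_self _).trans (f.norm_coe_le_norm x)
  have hsum : ∑ i ∈ range n, F i = f := by
    ext x
    rw [ContinuousMap.sum_apply]
    have := Finset.sum_range_sub (fun i => G i x) n
    simp only [hFdef, ContinuousMap.sub_apply] at this ⊢
    rw [this, hGx, hGx]
    have h1 : f x ≤ (n:ℝ) * δ := by rw [hnδ]; linarith [hfx_le x]
    simp [min_eq_left h1, min_eq_right (hf x)]
  -- compacts and opens
  set Ks : ℕ → TopologicalSpace.Compacts V := fun i =>
    ⟨{x | (i:ℝ) * δ ≤ f x}, (isClosed_le continuous_const f.continuous).isCompact⟩ with hKdef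
  set Us : ℕ → Set V := fun i => {x | ((i:ℝ) - 1) * δ < f x} with hUdef
  have hUopen : ∀ i, IsOpen (Us i) := fun i => isOpen_lt continuous_const f.continuous
  have hKU : ∀ i, (Ks i : Set V) ⊆ Us i := by
    intro i x hx
    simp only [hKdef, TopologicalSpace.Compacts.coe_mk, Set.mem_setOf_eq] at hx
    simp only [hUdef, Set.mem_setOf_eq]
    nlinarith
  have hpiece : ∀ i, Λ (F i) ≤ δ * (μ (Us i)).toReal := by
    intro i
    have h1 : Λ (F i) ≤ δ * ((rieszContentAux (lamNN Λ hΛ) (Ks i) : ℝ≥0) : ℝ) := by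
      refine lam_piece_le Λ hΛ (Ks i) hδ (F i) ?_ ?_ ?_
      · intro x
        rw [hFx]
        exact min_sub_min_nonneg (by nlinarith)
      · intro x
        rw [hFx]
        have := min_sub_min_le (t := f x) (a := (i:ℝ) * δ) (b := ((i:ℝ)+1) * δ) (by nlinarith)
        nlinarith
      · intro x hx
        simp only [hKdef, TopologicalSpace.Compacts.coe_mk, Set.mem_setOf_eq, not_le] at hx
        rw [hFx, min_eq_left hx.le, min_eq_left (by nlinarith), sub_self]
    refine h1.trans (mul_le_mul_of_nonneg_left ?_ hδ.le)
    exact content_le_measure Λ hΛ (Ks i) (hUopen i) (hKU i)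
  have hstep1 : Λ f ≤ ∑ i ∈ range n, δ * (μ (Us i)).toReal := by
    calc Λ f = ∑ i ∈ range n, Λ (F i) := by rw [← map_sum, hsum]
      _ ≤ _ := Finset.sum_le_sum (fun i _ => hpiece i)
  -- integral comparison
  have hind : ∀ i, MeasureTheory.Integrable ((Us i).indicator (fun _ => δ)) μ := by
    intro i
    rw [MeasureTheory.integrable_indicator_iff (hUopen i).measurableSet]
    exact MeasureTheory.integrableOn_const (measure_ne_top μ _)
  have hfint : MeasureTheory.Integrable (fun x => f x) μ :=
    f.continuous.integrable_of_hasCompactSupport (HasCompactSupport.of_compactSpace _)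
  have hptwise : ∀ x, ∑ i ∈ range n, (Us i).indicator (fun _ => δ) x ≤ f x + 2 * δ := by
    intro x
    set H : ℕ → ℝ := fun i => min (f x + 2 * δ) ((i:ℝ) * δ) with hHdef
    have hbound : ∀ i, (Us i).indicator (fun _ => δ) x ≤ H (i+1) - H i := by
      intro i
      by_cases hx : x ∈ Us i
      · rw [Set.indicator_of_mem hx]
        simp only [hUdef, Set.mem_setOf_eq] at hx
        have h2 : ((i:ℝ)+1) * δ ≤ f x + 2 * δ := by nlinarith
        have h3 : (i:ℝ) * δ ≤ f x + 2 * δ := by nlinarith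
        simp only [hHdef]
        push_cast
        rw [min_eq_right h2, min_eq_right h3]
        have : ((i:ℝ)+1) * δ - (i:ℝ) * δ = δ := by ring
        linarith
      · rw [Set.indicator_of_notMem hx]
        refine min_sub_min_nonneg ?_
        push_cast
        nlinarith
    calc ∑ i ∈ range n, (Us i).indicator (fun _ => δ) x
        ≤ ∑ i ∈ range n, (H (i+1) - H i) := Finset.sum_le_sum (fun i _ => hbound i)
      _ = H n - H 0 := Finset.sum_range_sub H n
      _ ≤ f x + 2 * δ := by
          have h1 : H 0 = 0 := by
            simp only [hHdef, Nat.cast_zero, zero_mul]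
            exact min_eq_right (by linarith [hf x])
          have h2 : H n ≤ f x + 2 * δ := min_le_left _ _
          linarith
  have hstep2 : ∑ i ∈ range n, δ * (μ (Us i)).toReal
      ≤ ∫ x, f x ∂μ + 2 * δ * (μ Set.univ).toReal := by
    have hL : ∑ i ∈ range n, δ * (μ (Us i)).toReal
        = ∫ x, ∑ i ∈ range n, (Us i).indicator (fun _ => δ) x ∂μ := by
      rw [MeasureTheory.integral_finset_sum _ (fun i _ => hind i)]
      refine Finset.sum_congr rfl (fun i _ => ?_)
      rw [MeasureTheory.integral_indicator_const _ (hUopen i).measurableSet]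
      simp [mul_comm, Measure.real]
    rw [hL]
    have hR : ∫ x, (f x + 2 * δ) ∂μ = ∫ x, f x ∂μ + 2 * δ * (μ Set.univ).toReal := by
      rw [MeasureTheory.integral_add hfint (MeasureTheory.integrable_const _),
        MeasureTheory.integral_const]
      simp [smul_eq_mul, mul_comm, Measure.real]
    rw [← hR]
    refine MeasureTheory.integral_mono (MeasureTheory.integrable_finset_sum _ (fun i _ => hind i))
      (hfint.add (MeasureTheory.integrable_const _)) hptwise
  have hεbound : 2 * δ * (μ Set.univ).toReal ≤ ε := by
    have hA : (2 * (‖f‖ + 1) * (μ Set.univ).toReal) / ε < n :=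
      lt_of_le_of_lt (le_max_right _ _) hn
    have h2 : 2 * (‖f‖ + 1) * (μ Set.univ).toReal < ε * n := by
      rw [div_lt_iff₀ hε] at hA
      linarith
    have h3 : 2 * δ * (μ Set.univ).toReal = (2 * (‖f‖ + 1) * (μ Set.univ).toReal) / n := by
      rw [hδdef]; ring
    rw [h3]
    rw [div_le_iff₀ hn0]
    nlinarith
  calc Λ f ≤ ∑ i ∈ range n, δ * (μ (Us i)).toReal := hstep1
    _ ≤ ∫ x, f x ∂μ + 2 * δ * (μ Set.univ).toReal := hstep2
    _ ≤ ∫ x, f x ∂μ + ε := by linarith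


end PietschAux


namespace PietschAux

section PartB

variable {𝕜 : Type*} [RCLike 𝕜] {X Y : Type*} [NormedAddCommGroup X] [NormedSpace 𝕜 X]
  [NormedAddCommGroup Y] [NormedSpace 𝕜 Y]

/-- Evaluation-power function on the dual ball. -/
def hFun (p : ℝ) (hp0 : 0 < p) (x : X) : C(dualBall 𝕜 X, ℝ) :=
  ⟨fun φ => ‖(φ : WeakDual 𝕜 X) x‖ ^ p, by
    have h1 : Continuous fun φ : dualBall 𝕜 X => ‖(φ : WeakDual 𝕜 X) x‖ :=
      ((WeakDual.eval_continuous x).comp continuous_subtype_val).norm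
    have h2 : Continuous fun t : ℝ => t ^ p :=
      continuous_iff_continuousAt.2 fun t => Real.continuousAt_rpow_const t p (Or.inr hp0.le)
    exact h2.comp h1⟩

@[simp] lemma hFun_apply (p : ℝ) (hp0 : 0 < p) (x : X) (φ : dualBall 𝕜 X) :
    hFun p hp0 x φ = ‖(φ : WeakDual 𝕜 X) x‖ ^ p := rfl

/-- The test functions for the separation argument. -/
def FF (p C : ℝ) (hp0 : 0 < p) (u : X →L[𝕜] Y) {m : ℕ} (x : Fin m → X) :
    C(dualBall 𝕜 X, ℝ) :=
  (∑ j, ‖u (x j)‖ ^ p) • 1 - C ^ p • ∑ j, hFun p hp0 (x j)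

lemma FF_apply (p C : ℝ) (hp0 : 0 < p) (u : X →L[𝕜] Y) {m : ℕ} (x : Fin m → X)
    (φ : dualBall 𝕜 X) :
    FF p C hp0 u x φ = (∑ j, ‖u (x j)‖ ^ p)
      - C ^ p * ∑ j, ‖(φ : WeakDual 𝕜 X) (x j)‖ ^ p := by
  simp [FF, ContinuousMap.sum_apply]

end PartB

end PietschAux

set_option maxHeartbeats 2000000 in
/-- **Pietsch Domination Theorem** for linear operators: `u : X → Y` is absolutely `p`-summing
iff there are `C ≥ 0` and a regular Borel probability measure `μ` on the closed unit ball
`B_{X*}` of the dual (with the weak-star topology) such that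
`‖u x‖ ≤ C·(∫_{B_{X*}} |φ x|^p dμ(φ))^(1/p)` for all `x ∈ X`. -/
theorem pietsch_domination_linear {𝕜 : Type u} [RCLike 𝕜]
    {X : Type v} [NormedAddCommGroup X] [NormedSpace 𝕜 X] [CompleteSpace X]
    {Y : Type w} [NormedAddCommGroup Y] [NormedSpace 𝕜 Y] [CompleteSpace Y]
    (p : ℝ) (hp : 1 ≤ p) (u : X →L[𝕜] Y) :
    PSumming 𝕜 p u ↔
      ∃ (C : ℝ) (μ : Measure (dualBall 𝕜 X)), 0 ≤ C ∧ IsProbabilityMeasure μ ∧ μ.Regular ∧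
        ∀ x : X, ‖u x‖ ≤ C * (∫ φ, ‖(φ : WeakDual 𝕜 X) x‖ ^ p ∂μ) ^ (1 / p) := by
  classical
  have hp0 : (0:ℝ) < p := lt_of_lt_of_le one_pos hp
  have hzero_mem : (0 : WeakDual 𝕜 X) ∈ dualBall 𝕜 X := by
    simp [dualBall, Metric.mem_closedBall]
  haveI : Nonempty (dualBall 𝕜 X) := ⟨⟨0, hzero_mem⟩⟩
  haveI : Nonempty {φ : StrongDual 𝕜 X // ‖φ‖ ≤ 1} := ⟨⟨0, by simp⟩⟩
  have hpinv : ∀ t : ℝ, 0 ≤ t → (t ^ p) ^ (1/p) = t := by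
    intro t ht
    rw [← Real.rpow_mul ht, mul_one_div_cancel hp0.ne', Real.rpow_one]
  have hpinv' : ∀ t : ℝ, 0 ≤ t → (t ^ (1/p)) ^ p = t := by
    intro t ht
    rw [← Real.rpow_mul ht, one_div_mul_cancel hp0.ne', Real.rpow_one]
  have hcont : ∀ x : X, Continuous fun φ : dualBall 𝕜 X => ‖(φ : WeakDual 𝕜 X) x‖ ^ p := by
    intro x
    have h1 : Continuous fun φ : dualBall 𝕜 X => ‖(φ : WeakDual 𝕜 X) x‖ :=
      ((WeakDual.eval_continuous x).comp continuous_subtype_val).norm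
    have h2 : Continuous fun t : ℝ => t ^ p :=
      continuous_iff_continuousAt.2 fun t => Real.continuousAt_rpow_const t p (Or.inr hp0.le)
    exact h2.comp h1
  constructor
  · rintro ⟨C, hC0, hC⟩
    have h1P : (1 : C(dualBall 𝕜 X, ℝ)) ∈ {g : C(dualBall 𝕜 X, ℝ) | ∀ φ, 0 < g φ} :=
      fun φ => by norm_num
    -- scaling lemmas
    have hsc1 : ∀ a : ℝ, 0 ≤ a → ∀ w : Y,
        ‖(RCLike.ofReal (a ^ (1/p)) : 𝕜) • w‖ ^ p = a * ‖w‖ ^ p := by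
      intro a ha w
      rw [norm_smul, RCLike.norm_ofReal, abs_of_nonneg (Real.rpow_nonneg ha _),
        Real.mul_rpow (Real.rpow_nonneg ha _) (norm_nonneg _), hpinv' a ha]
    have hsc2 : ∀ a : ℝ, 0 ≤ a → ∀ w : 𝕜,
        ‖(RCLike.ofReal (a ^ (1/p)) : 𝕜) • w‖ ^ p = a * ‖w‖ ^ p := by
      intro a ha w
      rw [norm_smul, RCLike.norm_ofReal, abs_of_nonneg (Real.rpow_nonneg ha _),
        Real.mul_rpow (Real.rpow_nonneg ha _) (norm_nonneg _), hpinv' a ha]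
    have hsc2' : ∀ a : ℝ, 0 ≤ a → ∀ w : 𝕜,
        ‖(RCLike.ofReal (a ^ (1/p)) : 𝕜) * w‖ ^ p = a * ‖w‖ ^ p := by
      intro a ha w
      rw [norm_mul, RCLike.norm_ofReal, abs_of_nonneg (Real.rpow_nonneg ha _),
        Real.mul_rpow (Real.rpow_nonneg ha _) (norm_nonneg _), hpinv' a ha]
    set S : Set C(dualBall 𝕜 X, ℝ) :=
      {g | ∃ (m : ℕ) (x : Fin m → X), g = PietschAux.FF p C hp0 u x} with hSdef
    set P : Set C(dualBall 𝕜 X, ℝ) := {g | ∀ φ, 0 < g φ} with hPdef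
    have hSconv : Convex ℝ S := by
      rintro f ⟨m, x, rfl⟩ g ⟨n, y, rfl⟩ a b ha hb hab
      refine ⟨m + n, Fin.append (fun j => (RCLike.ofReal (a ^ (1/p)) : 𝕜) • x j)
        (fun j => (RCLike.ofReal (b ^ (1/p)) : 𝕜) • y j), ?_⟩
      ext φ
      simp only [ContinuousMap.add_apply, ContinuousMap.smul_apply, smul_eq_mul,
        PietschAux.FF_apply, Fin.sum_univ_add, Fin.append_left, Fin.append_right,
        _root_.map_smul, hsc1 a ha, hsc1 b hb, hsc2 a ha, hsc2 b hb, hsc2' a ha, hsc2' b hb]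
      simp only [← Finset.mul_sum]
      ring
    have hPconv : Convex ℝ P := by
      rintro f hf g hg a b ha hb hab
      intro φ
      simp only [ContinuousMap.add_apply, ContinuousMap.smul_apply, smul_eq_mul]
      rcases eq_or_lt_of_le ha with h | h
      · have hb1 : b = 1 := by linarith
        simpa [← h, hb1] using hg φ
      · exact add_pos_of_pos_of_nonneg (mul_pos h (hf φ))
          (mul_nonneg hb (hg φ).le)
    have hPopen : IsOpen P := by
      rw [Metric.isOpen_iff]
      intro g hg
      obtain ⟨φm, -, hmin⟩ := isCompact_univ.exists_isMinOn Set.univ_nonempty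
        (map_continuous g).continuousOn
      refine ⟨g φm, hg φm, fun h hdist => ?_⟩
      intro φ
      have h1 : dist (h φ) (g φ) ≤ dist h g := ContinuousMap.dist_apply_le_dist φ
      have h2 : dist h g < g φm := by rwa [Metric.mem_ball] at hdist
      have h3 : g φm ≤ g φ := hmin (Set.mem_univ φ)
      have h4 : |h φ - g φ| < g φm := by
        rw [← Real.dist_eq]; exact lt_of_le_of_lt h1 h2
      have h5 := (abs_lt.mp h4).1
      linarith
    have hdisj : Disjoint P S := by
      rw [Set.disjoint_left]
      rintro g hgP ⟨m, x, rfl⟩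
      have hgsum_cont : Continuous
          (fun φ : dualBall 𝕜 X => ∑ j, ‖(φ : WeakDual 𝕜 X) (x j)‖ ^ p) := by
        refine continuous_finset_sum _ fun j _ => ?_
        exact hcont (x j)
      obtain ⟨φ₀, -, hmax⟩ := isCompact_univ.exists_isMaxOn Set.univ_nonempty
        hgsum_cont.continuousOn
      have hsum0 : (0:ℝ) ≤ ∑ j, ‖(φ₀ : WeakDual 𝕜 X) (x j)‖ ^ p :=
        Finset.sum_nonneg fun j _ => Real.rpow_nonneg (norm_nonneg _) _
      have hsumu0 : (0:ℝ) ≤ ∑ j, ‖u (x j)‖ ^ p :=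
        Finset.sum_nonneg fun j _ => Real.rpow_nonneg (norm_nonneg _) _
      have hsup_le : (⨆ ψ : {φ : StrongDual 𝕜 X // ‖φ‖ ≤ 1},
          (∑ j, ‖(ψ : StrongDual 𝕜 X) (x j)‖ ^ p) ^ (1/p))
          ≤ (∑ j, ‖(φ₀ : WeakDual 𝕜 X) (x j)‖ ^ p) ^ (1/p) := by
        refine ciSup_le fun ψ => ?_
        have hmem : (StrongDual.toWeakDual (ψ : StrongDual 𝕜 X))
            ∈ dualBall 𝕜 X := by
          rw [dualBall, Set.mem_preimage, mem_closedBall_zero_iff]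
          exact ψ.2
        have h1 := hmax (Set.mem_univ (⟨_, hmem⟩ : dualBall 𝕜 X))
        refine Real.rpow_le_rpow (Finset.sum_nonneg fun j _ =>
          Real.rpow_nonneg (norm_nonneg _) _) ?_ (by positivity)
        exact h1
      have h1 := hC m x
      have h3 : (∑ j, ‖u (x j)‖ ^ p) ^ (1/p)
          ≤ C * (∑ j, ‖(φ₀ : WeakDual 𝕜 X) (x j)‖ ^ p) ^ (1/p) :=
        h1.trans (mul_le_mul_of_nonneg_left hsup_le hC0)
      have h4 := Real.rpow_le_rpow (Real.rpow_nonneg hsumu0 _) h3 hp0.le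
      rw [hpinv' _ hsumu0, Real.mul_rpow hC0 (Real.rpow_nonneg hsum0 _),
        hpinv' _ hsum0] at h4
      have h6 := hgP φ₀
      rw [PietschAux.FF_apply] at h6
      linarith
    obtain ⟨L, s₀, hLP, hLS⟩ := geometric_hahn_banach_open hPconv hPopen hSconv hdisj
    have hS0mem : (0 : C(dualBall 𝕜 X, ℝ)) ∈ S := by
      refine ⟨0, (fun j => j.elim0), ?_⟩
      ext φ
      rw [PietschAux.FF_apply]
      simp
    have hs₀le : s₀ ≤ 0 := by simpa using hLS 0 hS0mem
    have hs₀ge : 0 ≤ s₀ := by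
      by_contra hs
      push_neg at hs
      rcases le_or_gt 0 (L 1) with h | h
      · have := hLP 1 h1P
        linarith
      · have htpos : 0 < s₀ / (2 * L 1) := div_pos_iff.mpr (Or.inr ⟨hs, by linarith⟩)
        have htP : ((s₀ / (2 * L 1)) • (1 : C(dualBall 𝕜 X, ℝ))) ∈ P := by
          intro φ
          simp only [ContinuousMap.smul_apply, ContinuousMap.one_apply, smul_eq_mul, mul_one]
          exact htpos
        have h2 := hLP _ htP
        rw [_root_.map_smul, smul_eq_mul] at h2
        have h3 : s₀ / (2 * L 1) * L 1 = s₀ / 2 := by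
          rw [div_mul_eq_mul_div, mul_comm (2:ℝ) (L 1), ← div_div,
            mul_div_assoc, div_self (ne_of_lt h), mul_one]
        rw [h3] at h2
        linarith
    have hs₀ : s₀ = 0 := le_antisymm hs₀le hs₀ge
    set Λ : C(dualBall 𝕜 X, ℝ) →ₗ[ℝ] ℝ := (-L : C(dualBall 𝕜 X, ℝ) →L[ℝ] ℝ).toLinearMap
      with hΛdef
    have hΛapp : ∀ f, Λ f = -(L f) := fun f => rfl
    have hSle : ∀ f ∈ S, Λ f ≤ 0 := by
      intro f hf
      have := hLS f hf
      rw [hΛapp]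
      linarith [hs₀ ▸ this]
    have hPgt : ∀ g ∈ P, 0 < Λ g := by
      intro g hg
      have := hLP g hg
      rw [hΛapp]
      linarith [hs₀ ▸ this]
    have hΛ1 : 0 < Λ 1 := hPgt 1 h1P
    have hpos : ∀ f : C(dualBall 𝕜 X, ℝ), (∀ φ, 0 ≤ f φ) → 0 ≤ Λ f := by
      intro f hf
      by_contra hneg
      push_neg at hneg
      set t : ℝ := (Λ 1 + 1) / (-Λ f) with htdef
      have htpos : 0 < t := div_pos (by linarith) (by linarith)
      have hmem : t • f + 1 ∈ P := by
        intro φ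
        simp only [ContinuousMap.add_apply, ContinuousMap.smul_apply,
          ContinuousMap.one_apply, smul_eq_mul]
        exact add_pos_of_nonneg_of_pos (mul_nonneg htpos.le (hf φ)) one_pos
      have h2 := hPgt _ hmem
      rw [map_add, _root_.map_smul, smul_eq_mul] at h2
      have h3 : t * Λ f = -(Λ 1 + 1) := by
        rw [htdef, div_mul_eq_mul_div, div_eq_iff (show -Λ f ≠ 0 by linarith)]
        ring
      rw [h3] at h2
      linarith
    -- the Pietsch measure
    set μ₀ : Measure (dualBall 𝕜 X) := PietschAux.rMeasure Λ hpos with hμ₀def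
    haveI hμ₀reg : μ₀.Regular := PietschAux.rMeasure_regular Λ hpos
    set a : ℝ≥0 := (Λ 1).toNNReal with hadef
    have haR : (a : ℝ) = Λ 1 := Real.coe_toNNReal _ hΛ1.le
    have ha0 : a ≠ 0 := by
      intro h
      rw [h] at haR
      simp at haR
      linarith
    have hμ₀univ : μ₀ Set.univ = (a : ℝ≥0∞) := by
      rw [hμ₀def, PietschAux.rMeasure_univ, PietschAux.lamNN_one, hadef]
    set μ : Measure (dualBall 𝕜 X) := ((a : ℝ≥0∞))⁻¹ • μ₀ with hμdef
    have ha0' : (a : ℝ≥0∞) ≠ 0 := by exact_mod_cast ha0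
    have hprob : IsProbabilityMeasure μ := by
      constructor
      rw [hμdef, Measure.smul_apply, hμ₀univ, smul_eq_mul,
        ENNReal.inv_mul_cancel ha0' ENNReal.coe_ne_top]
    have hreg : μ.Regular := by
      rw [hμdef]
      exact MeasureTheory.Measure.Regular.smul (ENNReal.inv_ne_top.2 ha0')
    refine ⟨C, μ, hC0, hprob, hreg, ?_⟩
    intro x0
    set I : ℝ := ∫ φ : dualBall 𝕜 X, ‖(φ : WeakDual 𝕜 X) x0‖ ^ p ∂μ with hIdef
    have hI0 : 0 ≤ I :=
      MeasureTheory.integral_nonneg fun φ => Real.rpow_nonneg (norm_nonneg _) _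
    have hFmem : PietschAux.FF p C hp0 u (fun _ : Fin 1 => x0) ∈ S := ⟨1, _, rfl⟩
    have hL1 := hSle _ hFmem
    have hFFeq : PietschAux.FF p C hp0 u (fun _ : Fin 1 => x0)
        = (‖u x0‖ ^ p) • (1 : C(dualBall 𝕜 X, ℝ)) - C ^ p • PietschAux.hFun p hp0 x0 := by
      rw [PietschAux.FF]
      simp
    rw [hFFeq, map_sub, _root_.map_smul, _root_.map_smul, smul_eq_mul, smul_eq_mul, sub_nonpos] at hL1
    have hintle : Λ (PietschAux.hFun p hp0 x0) ≤ ∫ φ, PietschAux.hFun p hp0 x0 φ ∂μ₀ :=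
      PietschAux.lam_le_integral Λ hpos _ (fun φ => Real.rpow_nonneg (norm_nonneg _) _)
    have hμ₀μ : μ₀ = (a : ℝ≥0∞) • μ := by
      rw [hμdef, smul_smul, ENNReal.mul_inv_cancel ha0' ENNReal.coe_ne_top, one_smul]
    have hIμ₀ : ∫ φ, PietschAux.hFun p hp0 x0 φ ∂μ₀ = Λ 1 * I := by
      rw [hμ₀μ, MeasureTheory.integral_smul_measure]
      simp only [ENNReal.coe_toReal, smul_eq_mul, haR]
      congr 1
    have hkey : ‖u x0‖ ^ p ≤ C ^ p * I := by
      have h2 : ‖u x0‖ ^ p * Λ 1 ≤ C ^ p * (Λ 1 * I) := by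
        calc ‖u x0‖ ^ p * Λ 1 ≤ C ^ p * Λ (PietschAux.hFun p hp0 x0) := hL1
          _ ≤ C ^ p * (Λ 1 * I) := by
              refine mul_le_mul_of_nonneg_left ?_ (Real.rpow_nonneg hC0 _)
              rw [← hIμ₀]
              exact hintle
      have h3 : ‖u x0‖ ^ p * Λ 1 ≤ C ^ p * I * Λ 1 := by
        calc ‖u x0‖ ^ p * Λ 1 ≤ C ^ p * (Λ 1 * I) := h2
          _ = C ^ p * I * Λ 1 := by ring
      exact le_of_mul_le_mul_right h3 hΛ1
    have h5 := Real.rpow_le_rpow (Real.rpow_nonneg (norm_nonneg _) _) hkey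
      (by positivity : (0:ℝ) ≤ 1/p)
    rwa [hpinv _ (norm_nonneg _), Real.mul_rpow (Real.rpow_nonneg hC0 _) hI0,
      hpinv _ hC0] at h5
  · rintro ⟨C, μ, hC0, hprob, hreg, hdom⟩
    refine ⟨C, hC0, ?_⟩
    intro m x
    set T := ⨆ φ : {φ : StrongDual 𝕜 X // ‖φ‖ ≤ 1},
        (∑ j, ‖(φ : StrongDual 𝕜 X) (x j)‖ ^ p) ^ (1/p) with hTdef
    have hbdd : BddAbove (Set.range fun φ : {φ : StrongDual 𝕜 X // ‖φ‖ ≤ 1} =>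
        (∑ j, ‖(φ : StrongDual 𝕜 X) (x j)‖ ^ p) ^ (1/p)) := by
      refine ⟨(∑ j, ‖x j‖ ^ p) ^ (1/p), ?_⟩
      rintro - ⟨φ, rfl⟩
      refine Real.rpow_le_rpow (Finset.sum_nonneg fun j _ =>
        Real.rpow_nonneg (norm_nonneg _) _) ?_ (by positivity)
      refine Finset.sum_le_sum fun j _ => ?_
      refine Real.rpow_le_rpow (norm_nonneg _) ?_ hp0.le
      calc ‖(φ : StrongDual 𝕜 X) (x j)‖ ≤ ‖(φ : StrongDual 𝕜 X)‖ * ‖x j‖ :=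
            (φ : StrongDual 𝕜 X).le_opNorm _
        _ ≤ 1 * ‖x j‖ := mul_le_mul_of_nonneg_right φ.2 (norm_nonneg _)
        _ = ‖x j‖ := one_mul _
    have hT0 : 0 ≤ T := by
      refine le_trans (le_of_eq ?_)
        (le_ciSup hbdd (⟨0, by simp⟩ : {φ : StrongDual 𝕜 X // ‖φ‖ ≤ 1}))
      simp only [ContinuousLinearMap.zero_apply, norm_zero, Real.zero_rpow hp0.ne',
        Finset.sum_const_zero]
      rw [Real.zero_rpow (one_div_ne_zero hp0.ne')]
    haveI := hprob
    have hint : ∀ j : Fin m, MeasureTheory.Integrable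
        (fun φ : dualBall 𝕜 X => ‖(φ : WeakDual 𝕜 X) (x j)‖ ^ p) μ := fun j =>
      (hcont (x j)).integrable_of_hasCompactSupport (HasCompactSupport.of_compactSpace _)
    have hInn : ∀ j : Fin m, 0 ≤ ∫ φ : dualBall 𝕜 X, ‖(φ : WeakDual 𝕜 X) (x j)‖ ^ p ∂μ :=
      fun j => MeasureTheory.integral_nonneg fun φ => Real.rpow_nonneg (norm_nonneg _) _
    have hterm : ∀ j : Fin m, ‖u (x j)‖ ^ p
        ≤ C ^ p * ∫ φ : dualBall 𝕜 X, ‖(φ : WeakDual 𝕜 X) (x j)‖ ^ p ∂μ := by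
      intro j
      have h1 := hdom (x j)
      have h2 := Real.rpow_le_rpow (norm_nonneg _) h1 hp0.le
      rwa [Real.mul_rpow hC0 (Real.rpow_nonneg (hInn j) _), hpinv' _ (hInn j)] at h2
    have hptw : ∀ φ : dualBall 𝕜 X,
        (∑ j, ‖(φ : WeakDual 𝕜 X) (x j)‖ ^ p) ≤ T ^ p := by
      intro φ
      set ψ : {φ : StrongDual 𝕜 X // ‖φ‖ ≤ 1} :=
        ⟨WeakDual.toStrongDual (φ : WeakDual 𝕜 X), mem_closedBall_zero_iff.mp φ.2⟩ with hψ
      have h1 : (∑ j, ‖(φ : WeakDual 𝕜 X) (x j)‖ ^ p) ^ (1/p) ≤ T := le_ciSup hbdd ψ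
      have h2 := Real.rpow_le_rpow (Real.rpow_nonneg (Finset.sum_nonneg fun j _ =>
        Real.rpow_nonneg (norm_nonneg _) _) _) h1 hp0.le
      rwa [hpinv' _ (Finset.sum_nonneg fun j _ => Real.rpow_nonneg (norm_nonneg _) _)] at h2
    have hsum : (∑ j, ‖u (x j)‖ ^ p) ≤ C ^ p * T ^ p := by
      calc (∑ j, ‖u (x j)‖ ^ p)
          ≤ ∑ j, C ^ p * ∫ φ : dualBall 𝕜 X, ‖(φ : WeakDual 𝕜 X) (x j)‖ ^ p ∂μ :=
            Finset.sum_le_sum fun j _ => hterm j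
        _ = C ^ p * ∫ φ : dualBall 𝕜 X, ∑ j, ‖(φ : WeakDual 𝕜 X) (x j)‖ ^ p ∂μ := by
            rw [MeasureTheory.integral_finset_sum _ (fun j _ => hint j), Finset.mul_sum]
        _ ≤ C ^ p * T ^ p := by
            refine mul_le_mul_of_nonneg_left ?_ (Real.rpow_nonneg hC0 _)
            calc ∫ φ : dualBall 𝕜 X, ∑ j, ‖(φ : WeakDual 𝕜 X) (x j)‖ ^ p ∂μ
                ≤ ∫ _ : dualBall 𝕜 X, T ^ p ∂μ := by
                  refine MeasureTheory.integral_mono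
                    (MeasureTheory.integrable_finset_sum _ (fun j _ => hint j))
                    (MeasureTheory.integrable_const _) hptw
              _ = T ^ p := by simp
    have hfinal := Real.rpow_le_rpow (Finset.sum_nonneg fun j _ =>
      Real.rpow_nonneg (norm_nonneg _) _) hsum (by positivity : (0:ℝ) ≤ 1/p)
    rwa [Real.mul_rpow (Real.rpow_nonneg hC0 _) (Real.rpow_nonneg hT0 _),
      hpinv _ hC0, hpinv _ hT0] at hfinal
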